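/- Let L be a self-adjoint continuous linear operator on the bipartite Hilbert space H = EuclideanSpace ℂ (Fin m × Fin n). Suppose the unit vectors a and b maximize ⟨a'⊗b', L (a'⊗b')⟩ over all pairs of unit vectors (a', b'), set g = ⟨a⊗b, L (a⊗b)⟩ and χ = L (a⊗b) − g • (a⊗b). Then χ is 2-orthogonal to a⊗b: for every x ∈ EuclideanSpace ℂ (Fin m) one has ⟨x⊗b, χ⟩ = 0, and for every y ∈ EuclideanSpace ℂ (Fin n) one has ⟨a⊗y, χ⟩ = 0. (Second form of the separability eigenvalue equation, L(a⊗b) = g(a⊗b) + χ with χ N-orthogonal.) -/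

import Mathlib

/-! For fixed unit `b`, the map `x ↦ x ⊗ b` is an isometry `e`, so `a` maximises the Rayleigh
quotient of the self-adjoint compression `e† L e` on the unit sphere. By the Lagrange-multiplier
characterisation of such maximisers, `a` is an eigenvector of `e† L e`, with eigenvalue the maximum
`g`; this is exactly `⟪x ⊗ b, L (a ⊗ b) - g • (a ⊗ b)⟫ = 0`. The other factor is symmetric. -/

open scoped ComplexInnerProductSpace

/-- The product vector `a ⊗ b` in the bipartite space, `(a ⊗ b)(i, k) = a i * b k`. -/
noncomputable def tp {m n : ℕ} (a : EuclideanSpace ℂ (Fin m)) (b : EuclideanSpace ℂ (Fin n)) :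
    EuclideanSpace ℂ (Fin m × Fin n) :=
  WithLp.toLp 2 (fun p : Fin m × Fin n => a p.1 * b p.2)

open scoped InnerProductSpace

theorem IsSelfAdjoint.inner_map_sub_smul_eq_zero_of_isMaxOn {𝕜 E H : Type*} [RCLike 𝕜]
    [NormedAddCommGroup E] [InnerProductSpace 𝕜 E] [CompleteSpace E]
    [NormedAddCommGroup H] [InnerProductSpace 𝕜 H] [CompleteSpace H]
    {L : H →L[𝕜] H} (hL : IsSelfAdjoint L) (e : E →ₗᵢ[𝕜] H) {a : E} (ha : ‖a‖ = 1)
    (hmax : ∀ x : E, ‖x‖ = 1 → RCLike.re ⟪e x, L (e x)⟫_𝕜 ≤ RCLike.re ⟪e a, L (e a)⟫_𝕜)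
    (x : E) :
    ⟪e x, L (e a) - (RCLike.re ⟪e a, L (e a)⟫_𝕜 : 𝕜) • e a⟫_𝕜 = 0 := by
  let T : E →L[𝕜] E :=
    ContinuousLinearMap.adjoint e.toContinuousLinearMap ∘L L ∘L e.toContinuousLinearMap
  have hT : IsSelfAdjoint T := hL.adjoint_conj _
  have hT_inner (x y : E) : ⟪x, T y⟫_𝕜 = ⟪e x, L (e y)⟫_𝕜 :=
    ContinuousLinearMap.adjoint_inner_right e.toContinuousLinearMap x (L (e y))
  have hT_re (x : E) : T.reApplyInnerSelf x = RCLike.re ⟪e x, L (e x)⟫_𝕜 := by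
    rw [T.reApplyInnerSelf_apply, inner_re_symm, hT_inner]
  have hmaxOn : IsMaxOn T.reApplyInnerSelf (Metric.sphere 0 ‖a‖) a := fun x hx => by
    simpa [hT_re, ha] using hmax x (by simpa [ha] using hx)
  have heig : T a = (RCLike.re ⟪e a, L (e a)⟫_𝕜 : 𝕜) • a := by
    rw [hT.eq_smul_self_of_isLocalExtrOn (Or.inr hmaxOn.localize),
      ContinuousLinearMap.rayleighQuotient, hT_re, ha, one_pow, div_one]
  rw [inner_sub_right, ← hT_inner, heig, inner_smul_right, inner_smul_right,
    LinearIsometry.inner_map_map, sub_self]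

section ProductVectors

variable {m n : ℕ}

theorem inner_tp_tp (x x' : EuclideanSpace ℂ (Fin m)) (y y' : EuclideanSpace ℂ (Fin n)) :
    ⟪tp x y, tp x' y'⟫ = ⟪x, x'⟫ * ⟪y, y'⟫ := by
  simp only [tp, PiLp.inner_apply, RCLike.inner_apply, map_mul, Finset.sum_mul_sum,
    ← Finset.univ_product_univ, Finset.sum_product]
  simp only [mul_mul_mul_comm]

noncomputable def tpₗ :
    EuclideanSpace ℂ (Fin m) →ₗ[ℂ] EuclideanSpace ℂ (Fin n) →ₗ[ℂ]
      EuclideanSpace ℂ (Fin m × Fin n) :=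
  LinearMap.mk₂ ℂ tp
    (fun _ _ _ => by ext; simp [tp, add_mul])
    (fun _ _ _ => by ext; simp [tp, mul_assoc])
    (fun _ _ _ => by ext; simp [tp, mul_add])
    (fun _ _ _ => by ext; simp [tp, mul_left_comm])

theorem tpₗ_apply (x : EuclideanSpace ℂ (Fin m)) (y : EuclideanSpace ℂ (Fin n)) :
    tpₗ x y = tp x y := rfl

noncomputable def tpLeftIsometry (y : EuclideanSpace ℂ (Fin n)) (hy : ‖y‖ = 1) :
    EuclideanSpace ℂ (Fin m) →ₗᵢ[ℂ] EuclideanSpace ℂ (Fin m × Fin n) :=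
  (tpₗ.flip y).isometryOfInner fun x x' => by simp [tpₗ_apply, inner_tp_tp, hy]

noncomputable def tpRightIsometry (x : EuclideanSpace ℂ (Fin m)) (hx : ‖x‖ = 1) :
    EuclideanSpace ℂ (Fin n) →ₗᵢ[ℂ] EuclideanSpace ℂ (Fin m × Fin n) :=
  (tpₗ x).isometryOfInner fun y y' => by simp [tpₗ_apply, inner_tp_tp, hx]

end ProductVectors

theorem see_second_form_general {m n : ℕ}
    (L : EuclideanSpace ℂ (Fin m × Fin n) →L[ℂ] EuclideanSpace ℂ (Fin m × Fin n))
    (hLsa : IsSelfAdjoint L)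
    (a : EuclideanSpace ℂ (Fin m)) (b : EuclideanSpace ℂ (Fin n))
    (ha : ‖a‖ = 1) (hb : ‖b‖ = 1)
    (hmax : ∀ (a' : EuclideanSpace ℂ (Fin m)) (b' : EuclideanSpace ℂ (Fin n)),
      ‖a'‖ = 1 → ‖b'‖ = 1 →
      (⟪tp a' b', L (tp a' b')⟫).re ≤ (⟪tp a b, L (tp a b)⟫).re)
    (g : ℝ) (hg : g = (⟪tp a b, L (tp a b)⟫).re)
    (χ : EuclideanSpace ℂ (Fin m × Fin n))
    (hχ : χ = L (tp a b) - (g : ℂ) • tp a b) :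
    (∀ x : EuclideanSpace ℂ (Fin m), ⟪tp x b, χ⟫ = 0) ∧
    (∀ y : EuclideanSpace ℂ (Fin n), ⟪tp a y, χ⟫ = 0) := by
  subst hχ hg
  exact ⟨hLsa.inner_map_sub_smul_eq_zero_of_isMaxOn (tpLeftIsometry b hb) ha
      (fun x hx => hmax x b hx hb),
    hLsa.inner_map_sub_smul_eq_zero_of_isMaxOn (tpRightIsometry a ha) hb
      (fun y hy => hmax a y ha hy)⟩

/-- **Second form of the separability eigenvalue equation.**  If the unit vectors `a, b`
maximize `⟨a'⊗b', L (a'⊗b')⟩` for a self-adjoint operator `L`, `g = ⟨a⊗b, L (a⊗b)⟩` and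
`χ = L(a⊗b) − g•(a⊗b)`, then `χ` is 2-orthogonal to `a⊗b`: `⟨x⊗b, χ⟩ = 0` for all `x`
and `⟨a⊗y, χ⟩ = 0` for all `y`. -/
theorem see_second_form {m n : ℕ} (hm : 1 ≤ m) (hn : 1 ≤ n)
    (L : EuclideanSpace ℂ (Fin m × Fin n) →L[ℂ] EuclideanSpace ℂ (Fin m × Fin n))
    (hLsa : IsSelfAdjoint L)
    (a : EuclideanSpace ℂ (Fin m)) (b : EuclideanSpace ℂ (Fin n))
    (ha : ‖a‖ = 1) (hb : ‖b‖ = 1)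
    (hmax : ∀ (a' : EuclideanSpace ℂ (Fin m)) (b' : EuclideanSpace ℂ (Fin n)),
      ‖a'‖ = 1 → ‖b'‖ = 1 →
      (⟪tp a' b', L (tp a' b')⟫).re ≤ (⟪tp a b, L (tp a b)⟫).re)
    (g : ℝ) (hg : g = (⟪tp a b, L (tp a b)⟫).re)
    (χ : EuclideanSpace ℂ (Fin m × Fin n))
    (hχ : χ = L (tp a b) - (g : ℂ) • tp a b) :
    (∀ x : EuclideanSpace ℂ (Fin m), ⟪tp x b, χ⟫ = 0) ∧
    (∀ y : EuclideanSpace ℂ (Fin n), ⟪tp a y, χ⟫ = 0) :=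
  see_second_form_general L hLsa a b ha hb hmax g hg χ hχ
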